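/- Let α ≥ 1, β ≥ 1 and N ≥ 1 be integers and let b ∈ ℕ. If x_2^b − y_2^b is integral over the ideal of ℂ[[x_2,y_2]] generated by x_2^β − y_2^β and x_2^N − y_2^N, then x_1^α x_2^b − y_1^α y_2^b is integral over the ideal I_Δ of ℂ[[x_1,x_2,y_1,y_2]] generated by x_1 − y_1, x_1^α x_2^β − y_1^α y_2^β and x_2^N − y_2^N. -/

import Mathlib

/-- An element `f` of a commutative ring is *integral over the ideal* `I` if it satisfies an
equation `f ^ m + a 1 * f ^ (m-1) + ⋯ + a (m-1) * f + a m = 0` with `a j ∈ I ^ j`. -/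
def IsIntegralOverIdeal {R : Type*} [CommRing R] (I : Ideal R) (f : R) : Prop :=
  ∃ m : ℕ, 0 < m ∧ ∃ a : ℕ → R, (∀ j, 1 ≤ j → j ≤ m → a j ∈ I ^ j) ∧
    f ^ m + ∑ j ∈ Finset.Icc 1 m, a j * f ^ (m - j) = 0

/-!
Modulo `I_Δ`, the element `x₁^α x₂^b − y₁^α y₂^b` is congruent to `x₁^α (x₂^b − y₂^b)`, and
multiplication by `x₁^α` carries `⟨x₂^β − y₂^β, x₂^N − y₂^N⟩` into `I_Δ`, because
`x₁^α ≡ y₁^α` and `x₁^α x₂^β ≡ y₁^α y₂^β` there. Integrality over an ideal is preserved by ring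
maps (here `ℂ[[x₂,y₂]] → ℂ[[x₁,x₂,y₁,y₂]]`), by multiplication with `c` when `c I ⊆ J`, and by
adding elements of the ideal. The last holds because `f` is integral over `I` exactly when `f t`
is integral over the Rees algebra `R[I t]`, where sums of integral elements are integral.
-/

section

open Finset Polynomial

variable {R : Type*} [CommRing R] {I : Ideal R} {f : R}

lemma sum_Icc_mul_pow_sub_eq_sum_range {M : Type*} [CommSemiring M] (a : ℕ → M) (x : M) (m : ℕ) :
    ∑ j ∈ Icc 1 m, a j * x ^ (m - j) = ∑ k ∈ range m, a (m - k) * x ^ k :=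
  sum_nbij' (m - ·) (m - ·) (by simp; omega) (by simp; omega) (by simp; omega)
    (by simp; omega) (by simp; intro j _ _; congr; omega)

theorem isIntegralOverIdeal_iff_exists_sum_range :
    IsIntegralOverIdeal I f ↔ ∃ d : ℕ, ∃ c : ℕ → R, c d = 1 ∧ (∀ k, c k ∈ I ^ (d - k)) ∧
      ∑ k ∈ range (d + 1), c k * f ^ k = 0 := by
  constructor
  · rintro ⟨m, hm, a, ha, heq⟩
    refine ⟨m, fun k => if k = m then 1 else a (m - k), by simp, fun k => ?_, ?_⟩
    · dsimp only
      split_ifs with hk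
      · simp [hk]
      · rcases le_or_gt m k with hmk | hkm
        · simp [Nat.sub_eq_zero_of_le hmk]
        · exact ha _ (by omega) (by omega)
    · beta_reduce
      rw [sum_range_succ, if_pos rfl, one_mul, add_comm, ← heq,
        sum_Icc_mul_pow_sub_eq_sum_range]
      congr 1
      exact sum_congr rfl fun k hk => by rw [if_neg (by simp at hk; omega)]
  · rintro ⟨d, c, hcd, hc, heq⟩
    rcases Nat.eq_zero_or_pos d with rfl | hd
    · have : Subsingleton R := subsingleton_of_zero_eq_one (by simpa [hcd] using heq.symm)
      exact ⟨1, one_pos, 0, fun _ _ _ => by simp, Subsingleton.elim _ _⟩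
    refine ⟨d, hd, fun j => c (d - j), fun j _ hj => ?_, ?_⟩
    · simpa [Nat.sub_sub_self hj] using hc (d - j)
    · rw [sum_Icc_mul_pow_sub_eq_sum_range, ← heq, sum_range_succ, hcd, one_mul, add_comm]
      congr 1
      exact sum_congr rfl fun k hk => by rw [Nat.sub_sub_self (by simp at hk; omega)]

theorem isIntegralOverIdeal_iff_isIntegral_reesAlgebra :
    IsIntegralOverIdeal I f ↔ IsIntegral (reesAlgebra I) (C f * X) := by
  rw [isIntegralOverIdeal_iff_exists_sum_range]
  constructor
  · rintro ⟨d, c, hcd, hc, heq⟩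
    let p : (reesAlgebra I)[X] := ∑ k ∈ range (d + 1),
      C ⟨monomial (d - k) (c k), reesAlgebra.monomial_mem.mpr (hc k)⟩ * X ^ k
    refine ⟨p, monic_of_natDegree_le_of_coeff_eq_one d ?_ ?_, ?_⟩
    · exact natDegree_sum_le_of_forall_le _ _ fun k hk =>
        (natDegree_C_mul_X_pow_le _ _).trans (by simp at hk; omega)
    · simp only [p, finsetSum_coeff, coeff_C_mul_X_pow, sum_ite_eq, mem_range, hcd]
      rw [if_pos (by omega)]
      ext1
      simp
    · simp only [p, eval₂_finsetSum, eval₂_mul, eval₂_C, eval₂_X_pow, Subalgebra.algebraMap_eq]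
      calc _ = ∑ k ∈ range (d + 1), monomial d (c k * f ^ k) := sum_congr rfl fun k hk => by
              rw [mem_range] at hk
              change monomial (d - k) (c k) * (C f * X) ^ k = _
              rw [mul_pow, ← C_pow, X_pow_eq_monomial, C_mul_monomial, monomial_mul_monomial,
                mul_one, Nat.sub_add_cancel (Nat.le_of_lt_succ hk)]
        _ = 0 := by rw [← map_sum, heq, map_zero]
  · rintro ⟨p, hpm, hp⟩
    refine ⟨p.natDegree, fun k => (p.coeff k : R[X]).coeff (p.natDegree - k), ?_, fun k => ?_, ?_⟩
    · simp [hpm.coeff_natDegree]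
    · exact (mem_reesAlgebra_iff I _).mp (p.coeff k).2 _
    · have := congrArg (coeff · p.natDegree) hp
      simp only [eval₂_eq_sum_range, finsetSum_coeff, coeff_zero] at this
      rw [← this]
      refine sum_congr rfl fun k hk => ?_
      rw [mem_range] at hk
      rw [mul_pow, ← C_pow, ← mul_assoc, coeff_mul_X_pow', if_pos (by omega), coeff_mul_C]
      rfl

theorem IsIntegralOverIdeal.add_mem {h : R} (hf : IsIntegralOverIdeal I f) (hh : h ∈ I) :
    IsIntegralOverIdeal I (f + h) := by
  rw [isIntegralOverIdeal_iff_isIntegral_reesAlgebra] at hf ⊢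
  have hhX : IsIntegral (reesAlgebra I) (C h * X) :=
    isIntegral_algebraMap (R := reesAlgebra I)
      (x := ⟨C h * X, C_mul_X_eq_monomial (R := R) ▸
        reesAlgebra.monomial_mem.mpr (pow_one I ▸ hh)⟩)
  simpa only [C_add, add_mul] using hf.add hhX

theorem IsIntegralOverIdeal.map {S F : Type*} [CommRing S] [FunLike F R S] [RingHomClass F R S]
    (φ : F) (hf : IsIntegralOverIdeal I f) : IsIntegralOverIdeal (I.map φ) (φ f) := by
  obtain ⟨m, hm, a, ha, heq⟩ := hf
  refine ⟨m, hm, fun j => φ (a j), fun j h1 h2 => ?_, ?_⟩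
  · rw [← Ideal.map_pow]
    exact Ideal.mem_map_of_mem φ (ha j h1 h2)
  · simpa only [map_add, map_sum, map_mul, map_pow, map_zero] using congrArg φ heq

theorem IsIntegralOverIdeal.mul_left {J : Ideal R} {c : R} (hc : Ideal.span {c} * I ≤ J)
    (hf : IsIntegralOverIdeal I f) : IsIntegralOverIdeal J (c * f) := by
  obtain ⟨m, hm, a, ha, heq⟩ := hf
  refine ⟨m, hm, fun j => c ^ j * a j, fun j h1 h2 => ?_, ?_⟩
  · refine Ideal.pow_right_mono hc j ?_
    rw [mul_pow, Ideal.span_singleton_pow]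
    exact Ideal.mul_mem_mul (Ideal.mem_span_singleton_self _) (ha j h1 h2)
  · calc (c * f) ^ m + ∑ j ∈ Icc 1 m, c ^ j * a j * (c * f) ^ (m - j)
        = c ^ m * (f ^ m + ∑ j ∈ Icc 1 m, a j * f ^ (m - j)) := by
          rw [mul_add, mul_sum, mul_pow]
          congr 1
          refine sum_congr rfl fun j hj => ?_
          rw [mul_pow, ← pow_mul_pow_sub c (mem_Icc.mp hj).2]
          ring
      _ = 0 := by rw [heq, mul_zero]

theorem isIntegralOverIdeal_pow_mul_pow_sub_pow_mul_pow {x₁ x₂ y₁ y₂ : R} {α β N b : ℕ}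
    (h : IsIntegralOverIdeal (Ideal.span {x₂ ^ β - y₂ ^ β, x₂ ^ N - y₂ ^ N}) (x₂ ^ b - y₂ ^ b)) :
    IsIntegralOverIdeal (Ideal.span {x₁ - y₁, x₁ ^ α * x₂ ^ β - y₁ ^ α * y₂ ^ β, x₂ ^ N - y₂ ^ N})
      (x₁ ^ α * x₂ ^ b - y₁ ^ α * y₂ ^ b) := by
  set I := Ideal.span {x₁ - y₁, x₁ ^ α * x₂ ^ β - y₁ ^ α * y₂ ^ β, x₂ ^ N - y₂ ^ N}
  have hx₁ : x₁ - y₁ ∈ I := Ideal.subset_span (by simp)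
  have hx₁x₂ : x₁ ^ α * x₂ ^ β - y₁ ^ α * y₂ ^ β ∈ I := Ideal.subset_span (by simp)
  have hx₂ : x₂ ^ N - y₂ ^ N ∈ I := Ideal.subset_span (by simp)
  have hpow : x₁ ^ α - y₁ ^ α ∈ I := Ideal.mem_of_dvd _ (sub_dvd_pow_sub_pow _ _ _) hx₁
  have hmul : Ideal.span {x₁ ^ α} * Ideal.span {x₂ ^ β - y₂ ^ β, x₂ ^ N - y₂ ^ N} ≤ I := by
    rw [Ideal.span_singleton_mul_le_iff]
    rintro _ hz
    obtain ⟨r, s, rfl⟩ := Ideal.mem_span_pair.mp hz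
    have : x₁ ^ α * (r * (x₂ ^ β - y₂ ^ β) + s * (x₂ ^ N - y₂ ^ N)) =
        r * ((x₁ ^ α * x₂ ^ β - y₁ ^ α * y₂ ^ β) - (x₁ ^ α - y₁ ^ α) * y₂ ^ β) +
          (s * x₁ ^ α) * (x₂ ^ N - y₂ ^ N) := by ring
    rw [this]
    exact I.add_mem (I.mul_mem_left _ (I.sub_mem hx₁x₂ (I.mul_mem_right _ hpow)))
      (I.mul_mem_left _ hx₂)
  have := (h.mul_left hmul).add_mem (I.mul_mem_right (y₂ ^ b) hpow)
  rwa [show x₁ ^ α * (x₂ ^ b - y₂ ^ b) + (x₁ ^ α - y₁ ^ α) * y₂ ^ b =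
    x₁ ^ α * x₂ ^ b - y₁ ^ α * y₂ ^ b by ring] at this

end

open MvPowerSeries in
theorem sufficiency_step_hypersurface_general (α β N b : ℕ)
    (J : Ideal (MvPowerSeries (Fin 2) ℂ))
    (hJ : J = Ideal.span {X 0 ^ β - X 1 ^ β, X 0 ^ N - X 1 ^ N})
    (IΔ : Ideal (MvPowerSeries (Fin 4) ℂ))
    (hIΔ : IΔ = Ideal.span {X 0 - X 2, X 0 ^ α * X 1 ^ β - X 2 ^ α * X 3 ^ β,
      X 1 ^ N - X 3 ^ N})
    (hb : IsIntegralOverIdeal J (X 0 ^ b - X 1 ^ b)) :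
    IsIntegralOverIdeal IΔ (X 0 ^ α * X 1 ^ b - X 2 ^ α * X 3 ^ b) := by
  subst hJ hIΔ
  have h := hb.map (rename ![(1 : Fin 4), 3] : MvPowerSeries (Fin 2) ℂ →ₐ[ℂ] _)
  simp only [Ideal.map_span, Set.image_insert_eq, Set.image_singleton, map_sub, map_pow,
    rename_X] at h
  exact isIntegralOverIdeal_pow_mul_pow_sub_pow_mul_pow h

open MvPowerSeries in
/-- Key step in the saturation computation for `y^N - x^{αN} z^β = 0`: if `x_2^b - y_2^b` is
integral over `⟨x_2^β - y_2^β, x_2^N - y_2^N⟩` in `ℂ[[x_2,y_2]]` (the two-variable power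
series ring, `x_2 = X 0`, `y_2 = X 1`), then `x_1^α x_2^b - y_1^α y_2^b` is integral over
`I_Δ = ⟨x_1 - y_1, x_1^α x_2^β - y_1^α y_2^β, x_2^N - y_2^N⟩` in `ℂ[[x_1,x_2,y_1,y_2]]`
(variables `x_1 = X 0`, `x_2 = X 1`, `y_1 = X 2`, `y_2 = X 3`). -/
theorem sufficiency_step_hypersurface (α β N b : ℕ)
    (hα : 1 ≤ α) (hβ : 1 ≤ β) (hN : 1 ≤ N)
    (J : Ideal (MvPowerSeries (Fin 2) ℂ))
    (hJ : J = Ideal.span {X 0 ^ β - X 1 ^ β, X 0 ^ N - X 1 ^ N})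
    (IΔ : Ideal (MvPowerSeries (Fin 4) ℂ))
    (hIΔ : IΔ = Ideal.span {X 0 - X 2, X 0 ^ α * X 1 ^ β - X 2 ^ α * X 3 ^ β,
      X 1 ^ N - X 3 ^ N})
    (hb : IsIntegralOverIdeal J (X 0 ^ b - X 1 ^ b)) :
    IsIntegralOverIdeal IΔ (X 0 ^ α * X 1 ^ b - X 2 ^ α * X 3 ^ b) :=
  sufficiency_step_hypersurface_general α β N b J hJ IΔ hIΔ hb
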